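/- Let G = (V, E) be a strongly connected digraph, let k ≥ 1 be an integer, and let v be a vertex of G. Suppose there is no path in the undirected graph G'_k between (v, 0) and (v, i) for any i ≠ 0. Then for every vertex u of G there is exactly one j ∈ Z/kZ such that (u, j) is connected to (v, 0) by a path in G'_k, and the labelling c : V → Z/kZ assigning to each u this unique j is a k-consistent labelling of G. -/

import Mathlib

variable {V : Type*}

/-- There is a path (walk) of length `n` from `u` to `v` in the digraph with
edge relation `E`: a sequence `u = f 0, f 1, …, f n = v` of vertices with
`(f i, f (i+1))` an edge for all `i < n`. Vertices and edges may repeat. -/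
def IsPathOfLength (E : V → V → Prop) (u v : V) (n : ℕ) : Prop :=
  ∃ f : ℕ → V, f 0 = u ∧ f n = v ∧ ∀ i < n, E (f i) (f (i + 1))

/-- There is a `(u,v)`-path (of some length). -/
def HasPath (E : V → V → Prop) (u v : V) : Prop :=
  ∃ n, IsPathOfLength E u v n

/-- A digraph is strongly connected if there is a path between every pair of vertices. -/
def StronglyConnected (E : V → V → Prop) : Prop :=
  ∀ u v, HasPath E u v

/-- The set of lengths of cycles (paths of positive length from a vertex to itself). -/
def cycleLengths (E : V → V → Prop) : Set ℕ :=
  {n | 0 < n ∧ ∃ v, IsPathOfLength E v v n}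

/-- A digraph is acyclic if it has no cycle. -/
def Acyclic (E : V → V → Prop) : Prop :=
  ∀ (v : V) (n : ℕ), 0 < n → ¬ IsPathOfLength E v v n

/-- `p` is the greatest common divisor of the set `S` of natural numbers:
`p` divides every element of `S`, and every common divisor of `S` divides `p`. -/
def IsSetGcd (S : Set ℕ) (p : ℕ) : Prop :=
  (∀ n ∈ S, p ∣ n) ∧ ∀ q : ℕ, (∀ n ∈ S, q ∣ n) → q ∣ p

/-- `u` and `v` are in the same strongly connected component. -/
def SameSCC (E : V → V → Prop) (u v : V) : Prop :=
  HasPath E u v ∧ HasPath E v u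

/-- The set of lengths of cycles contained in the strongly connected component of `c`. -/
def compCycleLengths (E : V → V → Prop) (c : V) : Set ℕ :=
  {n | 0 < n ∧ ∃ v, SameSCC E v c ∧ IsPathOfLength E v v n}

/-- `P` is the period of the digraph `E`: the least common multiple of the periods
(gcds of cycle lengths) of the strongly connected components containing at least one
cycle. Characterised by divisibility: every such component period divides `P`, and `P`
divides every common multiple of the component periods. -/
def IsDigraphPeriod (E : V → V → Prop) (P : ℕ) : Prop :=
  (∀ (c : V) (p : ℕ), (compCycleLengths E c).Nonempty →
      IsSetGcd (compCycleLengths E c) p → p ∣ P) ∧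
  ∀ Q : ℕ, (∀ (c : V) (p : ℕ), (compCycleLengths E c).Nonempty →
      IsSetGcd (compCycleLengths E c) p → p ∣ Q) → P ∣ Q

/-- There is a path of length `n` from `u` to `v` passing through the vertex `c`. -/
def IsPathThruOfLength (E : V → V → Prop) (u v c : V) (n : ℕ) : Prop :=
  ∃ f : ℕ → V, f 0 = u ∧ f n = v ∧ (∀ i < n, E (f i) (f (i + 1))) ∧ ∃ m ≤ n, f m = c

/-- Adjacency in the undirected graph `G'_k`: vertices `(u, i)` and `(v, j)` of
`V × ZMod k` are adjacent iff `(u,v) ∈ E` and `j = i + 1 (mod k)` (in either direction). -/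
def GkAdj (E : V → V → Prop) (k : ℕ) (a b : V × ZMod k) : Prop :=
  (E a.1 b.1 ∧ b.2 = a.2 + 1) ∨ (E b.1 a.1 ∧ a.2 = b.2 + 1)

/-- Two vertices of `G'_k` are joined by an (undirected) path. -/
def GkConn (E : V → V → Prop) (k : ℕ) : V × ZMod k → V × ZMod k → Prop :=
  Relation.ReflTransGen (GkAdj E k)

/- Lifting a directed path of length `n` from `u` to `w` gives a path in `G'_k` from `(u, i)` to
`(w, i + n)`, and connectivity in `G'_k` is invariant under shifting the second coordinate. So a
connection between two copies `(u, i)`, `(u, j)` of a vertex transfers, back along a lifted path,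
across, and forward again, to `(v, i)`, `(v, j)` and hence to `(v, 0)`, `(v, j - i)`. The hypothesis
on `v` therefore makes the label of every vertex unique, and an edge raises the label by one. -/

instance (E : V → V → Prop) (k : ℕ) : Std.Symm (GkAdj E k) where
  symm _ _ h := h.symm

namespace GkConn

variable {E : V → V → Prop} {k : ℕ}

theorem symm {a b : V × ZMod k} (h : GkConn E k a b) : GkConn E k b a :=
  Std.Symm.symm (r := Relation.ReflTransGen (GkAdj E k)) _ _ h

theorem trans {a b c : V × ZMod k} (hab : GkConn E k a b) (hbc : GkConn E k b c) :
    GkConn E k a c :=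
  Relation.ReflTransGen.trans hab hbc

theorem add_snd {a b : V × ZMod k} (h : GkConn E k a b) (t : ZMod k) :
    GkConn E k (a.1, a.2 + t) (b.1, b.2 + t) :=
  Relation.ReflTransGen.lift (r := GkAdj E k) (p := GkAdj E k)
    (fun x : V × ZMod k => (x.1, x.2 + t))
    (fun _ _ hadj => by
      rcases hadj with ⟨he, hj⟩ | ⟨he, hj⟩
      · exact Or.inl ⟨he, by simp only [hj]; ring⟩
      · exact Or.inr ⟨he, by simp only [hj]; ring⟩)
    _ _ h

theorem tail_edge {a : V × ZMod k} {u w : V} {i : ZMod k} (h : GkConn E k a (u, i))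
    (he : E u w) : GkConn E k a (w, i + 1) :=
  Relation.ReflTransGen.tail h (Or.inl ⟨he, rfl⟩)

end GkConn

variable {E : V → V → Prop} {k : ℕ}

theorem IsPathOfLength.gkConn {u w : V} {n : ℕ} (h : IsPathOfLength E u w n) (i : ZMod k) :
    GkConn E k (u, i) (w, i + n) := by
  obtain ⟨f, rfl, rfl, hf⟩ := h
  suffices ∀ m ≤ n, GkConn E k (f 0, i) (f m, i + m) from this n le_rfl
  intro m
  induction m with
  | zero => intro _; rw [Nat.cast_zero, add_zero]; exact Relation.ReflTransGen.refl
  | succ m ih =>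
    intro hm
    simpa [add_assoc] using (ih (Nat.le_of_succ_le hm)).tail_edge (hf m hm)

theorem HasPath.gkConn_of_gkConn {u w : V} (hp : HasPath E u w) {i j : ZMod k}
    (h : GkConn E k (u, i) (u, j)) : GkConn E k (w, i) (w, j) := by
  obtain ⟨m, hm⟩ := hp
  have hconn : GkConn E k (w, i + m) (w, j + m) :=
    ((hm.gkConn i).symm.trans h).trans (hm.gkConn j)
  simpa using hconn.add_snd (-m)

theorem eq_of_gkConn_of_gkConn (hsc : StronglyConnected E) {v : V}
    (hv : ∀ i : ZMod k, i ≠ 0 → ¬ GkConn E k (v, 0) (v, i)) {u : V} {j j' : ZMod k}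
    (h : GkConn E k (v, 0) (u, j)) (h' : GkConn E k (v, 0) (u, j')) : j = j' := by
  have hvv : GkConn E k (v, j) (v, j') := (hsc u v).gkConn_of_gkConn (h.symm.trans h')
  have hzero : GkConn E k (v, 0) (v, j' - j) := by
    simpa [sub_eq_add_neg] using hvv.add_snd (-j)
  by_contra hne
  exact hv (j' - j) (sub_ne_zero.mpr (Ne.symm hne)) hzero

theorem consistent_labelling_of_no_Gk_path_general (E : V → V → Prop)
    (hsc : StronglyConnected E) (k : ℕ) (v : V)
    (hv : ∀ i : ZMod k, i ≠ 0 → ¬ GkConn E k (v, 0) (v, i)) :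
    (∀ u : V, ∃! j : ZMod k, GkConn E k (v, 0) (u, j)) ∧
    ∀ c : V → ZMod k, (∀ u : V, GkConn E k (v, 0) (u, c u)) →
      ∀ a b, E a b → c b = c a + 1 := by
  refine ⟨fun u => ?_, fun c hc a b hab => ?_⟩
  · obtain ⟨n, hn⟩ := hsc v u
    have hconn : GkConn E k (v, 0) (u, n) := by simpa using hn.gkConn (0 : ZMod k)
    exact ⟨n, hconn, fun j hj => eq_of_gkConn_of_gkConn hsc hv hj hconn⟩
  · exact eq_of_gkConn_of_gkConn hsc hv (hc b) ((hc a).tail_edge hab)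

/-- If `G` is strongly connected and no `(v, i)` with `i ≠ 0` is connected
to `(v, 0)` in `G'_k`, then every vertex `u` has a unique `j` with `(u, j)` connected to
`(v, 0)`, and the labelling assigning this unique `j` is `k`-consistent. -/
theorem consistent_labelling_of_no_Gk_path (E : V → V → Prop)
    (hsc : StronglyConnected E) (k : ℕ) (hk : 1 ≤ k) (v : V)
    (hv : ∀ i : ZMod k, i ≠ 0 → ¬ GkConn E k (v, 0) (v, i)) :
    (∀ u : V, ∃! j : ZMod k, GkConn E k (v, 0) (u, j)) ∧
    ∀ c : V → ZMod k, (∀ u : V, GkConn E k (v, 0) (u, c u)) →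
      ∀ a b, E a b → c b = c a + 1 :=
  consistent_labelling_of_no_Gk_path_general E hsc k v hv
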